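/- arXiv:1407.4182 — 5 statements merged into one kernel-verified Lean document; each statement's English description precedes it below -/
import Mathlib

section
/- For every p ∈ [2,∞) there exists a constant K(p) ∈ (0,∞), depending only on p, such that for every n ≥ 1 and all independent (not necessarily identically distributed) real random variables η₁, …, η_n with E η_i = 0 and E|η_i|^p < ∞ for each i, one has (E|∑_{i=1}^n η_i|^p)^{1/p} ≤ K(p) · ( ∑_{i=1}^n (E|η_i|^p)^{2/p} )^{1/2}. -/
/-!
Second-order Taylor expansion of `t ↦ |a + t b| ^ p` gives, with `C = p (p - 1) 2 ^ (p - 2)`,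
`|a + b| ^ p ≤ |a| ^ p + p |a| ^ (p - 2) a b + C (|a| ^ (p - 2) b ^ 2 + |b| ^ p)`.
For `S` independent of a centred `X` the linear term integrates to zero, and Lyapunov's
inequality turns the rest into
`E|S + X| ^ p ≤ E|S| ^ p + C (‖S‖ₚ ^ (p - 2) ‖X‖ₚ ^ 2 + ‖X‖ₚ ^ p)`.
Adding the `ηᵢ` one at a time, this recursion preserves
`E|∑ ηᵢ| ^ p ≤ K ^ p (∑ ‖ηᵢ‖ₚ ^ 2) ^ (p / 2)` as soon as `2 C ≤ K ^ 2 ≤ K ^ p`,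
e.g. for `K = 2 C`.
-/

open MeasureTheory ProbabilityTheory ENNReal Finset

lemma Real.add_rpow_le_two_rpow_mul_rpow_add_rpow {p a b : ℝ} (ha : 0 ≤ a) (hb : 0 ≤ b)
    (hp : 0 ≤ p) : (a + b) ^ p ≤ 2 ^ p * (a ^ p + b ^ p) := calc
  (a + b) ^ p ≤ (2 * max a b) ^ p := by
    rw [two_mul]; gcongr <;> simp
  _ = 2 ^ p * max a b ^ p := Real.mul_rpow zero_le_two (le_max_of_le_left ha)
  _ ≤ 2 ^ p * (a ^ p + b ^ p) := by
    gcongr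
    rcases max_cases a b with ⟨h, -⟩ | ⟨h, -⟩ <;> rw [h]
    · exact le_add_of_nonneg_right (by positivity)
    · exact le_add_of_nonneg_left (by positivity)

lemma abs_rpow_sub_two_mul_abs {p : ℝ} (hp : 2 ≤ p) (x : ℝ) :
    |x| ^ (p - 2) * |x| = |x| ^ (p - 1) := by
  rw [← Real.rpow_add_one' (abs_nonneg x) (by linarith)]; ring_nf

lemma hasDerivAt_abs_rpow_sub_two_mul {p : ℝ} (hp : 2 ≤ p) (x : ℝ) :
    HasDerivAt (fun y : ℝ => |y| ^ (p - 2) * y) ((p - 1) * |x| ^ (p - 2)) x := by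
  rcases hp.eq_or_lt with rfl | hp'
  · norm_num
    exact hasDerivAt_id' x
  rcases eq_or_ne x 0 with rfl | hx
  · have hq : p - 2 ≠ 0 := by linarith
    rw [abs_zero, Real.zero_rpow hq, mul_zero, hasDerivAt_iff_tendsto_slope]
    have hcont : Continuous fun y : ℝ => |y| ^ (p - 2) :=
      continuous_abs.rpow_const fun _ => Or.inr (by linarith)
    refine (by simpa [Real.zero_rpow hq] using hcont.tendsto 0 : Filter.Tendsto _ _ _)
      |>.mono_left nhdsWithin_le_nhds |>.congr' ?_
    filter_upwards [self_mem_nhdsWithin] with y (hy : y ≠ 0)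
    simp [slope_def_field, hy]
  · have h := ((hasDerivAt_abs hx).rpow_const (p := p - 2) (Or.inl (abs_ne_zero.mpr hx))).mul
      (hasDerivAt_id' x)
    refine h.congr_deriv ?_
    have hsign : (SignType.sign x : ℝ) * x = |x| := by
      rcases hx.lt_or_gt with h | h <;> simp [h, abs_of_neg, abs_of_pos]
    have hpow : |x| ^ (p - 2 - 1) * |x| = |x| ^ (p - 2) := by
      rw [← Real.rpow_add_one (abs_ne_zero.mpr hx)]; ring_nf
    linear_combination (p - 2) * hpow + (p - 2) * |x| ^ (p - 2 - 1) * hsign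

lemma abs_abs_rpow_sub_two_mul_sub_le {p M x y : ℝ} (hp : 2 ≤ p) (hx : |x| ≤ M)
    (hy : |y| ≤ M) :
    |(|x| ^ (p - 2) * x) - |y| ^ (p - 2) * y| ≤ (p - 1) * M ^ (p - 2) * |x - y| := by
  have hM : ∀ z, |z| ≤ M → z ∈ Set.Icc (-M) M := fun z hz => abs_le.mp hz
  refine (convex_Icc (-M) M).norm_image_sub_le_of_norm_hasDerivWithin_le
    (fun z _ => (hasDerivAt_abs_rpow_sub_two_mul hp z).hasDerivWithinAt) (fun z hz => ?_)
    (hM y hy) (hM x hx)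
  have hp1 : 0 ≤ p - 1 := by linarith
  rw [Real.norm_eq_abs, abs_of_nonneg (by positivity)]
  gcongr
  exact abs_le.mpr hz

lemma abs_add_rpow_le_taylor {p : ℝ} (hp : 2 ≤ p) (a b : ℝ) :
    |a + b| ^ p ≤ |a| ^ p + p * (|a| ^ (p - 2) * a) * b
      + p * (p - 1) * (|a| + |b|) ^ (p - 2) * b ^ 2 := by
  set ψ : ℝ → ℝ := fun y => |y| ^ (p - 2) * y
  set F : ℝ → ℝ := fun t => |a + t * b| ^ p - t * (p * ψ a * b)
  have hF : ∀ t, HasDerivAt F (p * ψ (a + t * b) * b - p * ψ a * b) t := by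
    intro t
    have h := ((hasDerivAt_abs_rpow (a + t * b) (by linarith : (1 : ℝ) < p)).comp t
      (((hasDerivAt_id' t).mul_const b).const_add a)).sub
        ((hasDerivAt_id' t).mul_const (p * ψ a * b))
    refine h.congr_deriv ?_
    simp only [ψ]; ring
  have hbound : ∀ t ∈ Set.Icc (0 : ℝ) 1,
      ‖p * ψ (a + t * b) * b - p * ψ a * b‖ ≤ p * (p - 1) * (|a| + |b|) ^ (p - 2) * b ^ 2 := by
    intro t ⟨ht0, ht1⟩
    have htb : |t * b| ≤ |b| := by
      rw [abs_mul, abs_of_nonneg ht0]; exact mul_le_of_le_one_left (abs_nonneg b) ht1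
    have hlip := abs_abs_rpow_sub_two_mul_sub_le hp (x := a + t * b) (y := a)
      ((abs_add_le a (t * b)).trans (by linarith)) (le_add_of_nonneg_right (abs_nonneg b))
    rw [add_sub_cancel_left] at hlip
    calc ‖p * ψ (a + t * b) * b - p * ψ a * b‖ = p * |b| * |ψ (a + t * b) - ψ a| := by
          rw [Real.norm_eq_abs, ← mul_sub_right_distrib, ← mul_sub_left_distrib, abs_mul,
            abs_mul, abs_of_nonneg (by linarith : (0 : ℝ) ≤ p)]; ring
      _ ≤ p * |b| * ((p - 1) * (|a| + |b|) ^ (p - 2) * |b|) := by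
          gcongr
          have hp1 : 0 ≤ p - 1 := by linarith
          exact hlip.trans (by gcongr)
      _ = p * (p - 1) * (|a| + |b|) ^ (p - 2) * b ^ 2 := by rw [← sq_abs b]; ring
  have h := (convex_Icc (0 : ℝ) 1).norm_image_sub_le_of_norm_hasDerivWithin_le
    (fun t _ => (hF t).hasDerivWithinAt) hbound (Set.left_mem_Icc.mpr zero_le_one)
    (Set.right_mem_Icc.mpr zero_le_one)
  simp only [F, Real.norm_eq_abs, sub_zero, abs_one, mul_one, one_mul, zero_mul, add_zero] at h
  linarith [le_abs_self (|a + b| ^ p - p * ψ a * b - |a| ^ p)]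

lemma abs_add_rpow_le {p : ℝ} (hp : 2 ≤ p) (a b : ℝ) :
    |a + b| ^ p ≤ |a| ^ p + p * (|a| ^ (p - 2) * a * b)
      + p * (p - 1) * 2 ^ (p - 2) * (|a| ^ (p - 2) * b ^ 2 + |b| ^ p) := by
  have hb : |b| ^ (p - 2) * b ^ 2 = |b| ^ p := by
    rw [← sq_abs, ← Real.rpow_two, ← Real.rpow_add' (abs_nonneg b) (by linarith)]; ring_nf
  have hsplit := Real.add_rpow_le_two_rpow_mul_rpow_add_rpow (abs_nonneg a) (abs_nonneg b)
    (by linarith : 0 ≤ p - 2)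
  have hp1 : 0 ≤ p - 1 := by linarith
  calc |a + b| ^ p ≤ |a| ^ p + p * (|a| ^ (p - 2) * a) * b
        + p * (p - 1) * (|a| + |b|) ^ (p - 2) * b ^ 2 := abs_add_rpow_le_taylor hp a b
    _ ≤ |a| ^ p + p * (|a| ^ (p - 2) * a) * b
        + p * (p - 1) * (2 ^ (p - 2) * (|a| ^ (p - 2) + |b| ^ (p - 2))) * b ^ 2 := by gcongr
    _ = _ := by rw [← hb]; ring

lemma rpow_half_add_mul_le {p B b : ℝ} (hp : 2 ≤ p) (hB : 0 ≤ B) (hb : 0 ≤ b) :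
    B ^ (p / 2) + B ^ ((p - 2) / 2) * b ≤ (B + b) ^ (p / 2) := by
  have hsucc : ∀ y : ℝ, 0 ≤ y → y ^ (p / 2) = y ^ ((p - 2) / 2) * y := fun y hy => by
    rw [← Real.rpow_add_one' hy (by linarith)]; ring_nf
  rw [hsucc B hB, hsucc (B + b) (by positivity), ← mul_add]
  gcongr
  linarith

lemma le_mul_rpow_add_of_le_mul_rpow {p C K x B b : ℝ} (hp : 2 ≤ p) (hC : 0 ≤ C) (hK : 1 ≤ K)
    (hCK : 2 * C ≤ K ^ 2) (hx : 0 ≤ x) (hB : 0 ≤ B) (hb : 0 ≤ b)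
    (hxB : x ≤ K ^ p * B ^ (p / 2)) :
    x + C * (x ^ ((p - 2) / p) * b + b ^ (p / 2)) ≤ K ^ p * (B + b) ^ (p / 2) := by
  have hK0 : 0 < K := by linarith
  have hKp : K ^ p = K ^ (p - 2) * K ^ 2 := by
    rw [← Real.rpow_natCast, ← Real.rpow_add hK0]; norm_num
  have hx' : x ^ ((p - 2) / p) ≤ K ^ (p - 2) * B ^ ((p - 2) / 2) := calc
    x ^ ((p - 2) / p) ≤ (K ^ p * B ^ (p / 2)) ^ ((p - 2) / p) := by
      gcongr
    _ = K ^ (p - 2) * B ^ ((p - 2) / 2) := by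
      rw [Real.mul_rpow (by positivity) (by positivity), ← Real.rpow_mul hK0.le,
        ← Real.rpow_mul hB]
      congr 2 <;> field_simp
  have hCK' : C * K ^ (p - 2) ≤ K ^ p / 2 := by
    rw [hKp]; nlinarith [Real.rpow_pos_of_pos hK0 (p - 2)]
  have hC' : C ≤ K ^ p / 2 := by
    have : 1 ≤ K ^ (p - 2) := Real.one_le_rpow hK (by linarith)
    rw [hKp]; nlinarith
  have h₁ := rpow_half_add_mul_le hp hB hb
  have h₂ := Real.add_rpow_le_rpow_add hB hb (by linarith : 1 ≤ p / 2)
  calc x + C * (x ^ ((p - 2) / p) * b + b ^ (p / 2))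
      ≤ K ^ p * B ^ (p / 2) + (C * K ^ (p - 2)) * (B ^ ((p - 2) / 2) * b) + C * b ^ (p / 2) := by
        have := mul_le_mul_of_nonneg_right hx' hb
        nlinarith
    _ ≤ K ^ p * B ^ (p / 2) + K ^ p / 2 * (B ^ ((p - 2) / 2) * b) + K ^ p / 2 * b ^ (p / 2) := by
        gcongr
    _ ≤ K ^ p * (B + b) ^ (p / 2) := by nlinarith [Real.rpow_nonneg hK0.le p]

section

variable {Ω : Type*} [MeasurableSpace Ω] {P : Measure Ω}

lemma MeasureTheory.MemLp.integrable_abs_rpow_of_le [IsFiniteMeasure P] {f : Ω → ℝ} {p q : ℝ}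
    (hf : MemLp f (ENNReal.ofReal p) P) (hq : 0 ≤ q) (hqp : q ≤ p) :
    Integrable (fun ω => |f ω| ^ q) P := by
  simpa [ENNReal.toReal_ofReal hq] using
    (hf.mono_exponent (ENNReal.ofReal_le_ofReal hqp)).integrable_norm_rpow'

lemma memLp_ofReal_of_lintegral_lt_top {f : Ω → ℝ} {p : ℝ} (hp : 0 < p)
    (hf : AEStronglyMeasurable f P) (h : ∫⁻ ω, ENNReal.ofReal |f ω| ^ p ∂P < ∞) :
    MemLp f (ENNReal.ofReal p) P := by
  refine ⟨hf, ?_⟩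
  rw [eLpNorm_lt_top_iff_lintegral_rpow_enorm_lt_top (by simpa) ofReal_ne_top,
    toReal_ofReal hp.le]
  simpa only [Real.enorm_eq_ofReal_abs] using h

lemma lintegral_ofReal_abs_rpow {f : Ω → ℝ} {q : ℝ} (hq : 0 ≤ q)
    (hf : Integrable (fun ω => |f ω| ^ q) P) :
    ∫⁻ ω, ENNReal.ofReal |f ω| ^ q ∂P = ENNReal.ofReal (∫ ω, |f ω| ^ q ∂P) := by
  rw [ofReal_integral_eq_lintegral_ofReal hf (ae_of_all _ fun ω => by positivity)]
  simp_rw [ofReal_rpow_of_nonneg (abs_nonneg _) hq]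

variable [IsProbabilityMeasure P]

lemma integral_abs_rpow_le_rpow_integral {f : Ω → ℝ} {p q : ℝ}
    (hf : MemLp f (ENNReal.ofReal p) P) (hq : 0 ≤ q) (hqp : q ≤ p) :
    ∫ ω, |f ω| ^ q ∂P ≤ (∫ ω, |f ω| ^ p ∂P) ^ (q / p) := by
  rcases hq.eq_or_lt with rfl | hq
  · simp
  have hpq : 1 ≤ p / q := (one_le_div hq).mpr hqp
  have hpow : ∀ x : ℝ, (|x| ^ q) ^ (p / q) = |x| ^ p := fun x => by
    rw [← Real.rpow_mul (abs_nonneg x), mul_div_cancel₀ p hq.ne']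
  have hJensen : (∫ ω, |f ω| ^ q ∂P) ^ (p / q) ≤ ∫ ω, |f ω| ^ p ∂P := by
    have hfp : Integrable ((fun t => t ^ (p / q)) ∘ fun ω => |f ω| ^ q) P := by
      simpa only [Function.comp_def, hpow] using
        hf.integrable_abs_rpow_of_le (by linarith) le_rfl
    simpa only [hpow] using (convexOn_rpow hpq).map_integral_le
      (Real.continuous_rpow_const (by positivity)).continuousOn isClosed_Ici
      (ae_of_all _ fun ω => Set.mem_Ici.mpr (by positivity))
      (hf.integrable_abs_rpow_of_le hq.le hqp) hfp
  calc ∫ ω, |f ω| ^ q ∂P = ((∫ ω, |f ω| ^ q ∂P) ^ (p / q)) ^ (q / p) := by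
        rw [← Real.rpow_mul (integral_nonneg fun ω => by positivity),
          div_mul_div_cancel₀ hq.ne', div_self (by linarith : p ≠ 0), Real.rpow_one]
    _ ≤ (∫ ω, |f ω| ^ p ∂P) ^ (q / p) :=
        Real.rpow_le_rpow (by positivity) hJensen (div_nonneg hq.le (by linarith))

lemma integral_abs_add_rpow_le_of_indepFun {p : ℝ} (hp : 2 ≤ p) {S X : Ω → ℝ}
    (hSX : IndepFun S X P) (hS : MemLp S (ENNReal.ofReal p) P)
    (hX : MemLp X (ENNReal.ofReal p) P) (hX0 : ∫ ω, X ω ∂P = 0) :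
    ∫ ω, |S ω + X ω| ^ p ∂P ≤ ∫ ω, |S ω| ^ p ∂P + p * (p - 1) * 2 ^ (p - 2) *
      ((∫ ω, |S ω| ^ (p - 2) ∂P) * (∫ ω, X ω ^ 2 ∂P) + ∫ ω, |X ω| ^ p ∂P) := by
  set C := p * (p - 1) * 2 ^ (p - 2)
  have hψ : Measurable fun x : ℝ => |x| ^ (p - 2) * x := by fun_prop
  have hpow : Measurable fun x : ℝ => |x| ^ (p - 2) := by fun_prop
  have hSp := hS.integrable_abs_rpow_of_le (by linarith) le_rfl
  have hXp := hX.integrable_abs_rpow_of_le (by linarith) le_rfl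
  have hSp2 := hS.integrable_abs_rpow_of_le (q := p - 2) (by linarith) (by linarith)
  have hX2 : Integrable (fun ω => X ω ^ 2) P := by
    simpa only [Real.rpow_two, sq_abs] using hX.integrable_abs_rpow_of_le zero_le_two hp
  have hψS : Integrable (fun ω => |S ω| ^ (p - 2) * S ω) P := by
    refine (hS.integrable_abs_rpow_of_le (q := p - 1) (by linarith) (by linarith)).mono'
      (hψ.comp_aemeasurable hS.aemeasurable).aestronglyMeasurable (ae_of_all _ fun ω => ?_)
    rw [Real.norm_eq_abs, abs_mul, abs_of_nonneg (by positivity), abs_rpow_sub_two_mul_abs hp]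
  have hXint : Integrable X P := hX.integrable (by simpa using hp.trans' one_le_two)
  have hind₁ : IndepFun (fun ω => |S ω| ^ (p - 2) * S ω) X P := hSX.comp hψ measurable_id
  have hind₂ : IndepFun (fun ω => |S ω| ^ (p - 2)) (fun ω => X ω ^ 2) P :=
    hSX.comp hpow (measurable_id.pow_const 2)
  have hI₁ : Integrable (fun ω => |S ω| ^ (p - 2) * S ω * X ω) P :=
    hind₁.integrable_mul hψS hXint
  have hI₂ : Integrable (fun ω => |S ω| ^ (p - 2) * X ω ^ 2) P := hind₂.integrable_mul hSp2 hX2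
  have hA : Integrable (fun ω => |S ω| ^ p + p * (|S ω| ^ (p - 2) * S ω * X ω)) P :=
    hSp.add (hI₁.const_mul p)
  have hB : Integrable (fun ω => |S ω| ^ (p - 2) * X ω ^ 2 + |X ω| ^ p) P := hI₂.add hXp
  have hcross : ∫ ω, |S ω| ^ (p - 2) * S ω * X ω ∂P = 0 := by
    simpa [hX0] using hind₁.integral_mul_eq_mul_integral hψS.aestronglyMeasurable
      hXint.aestronglyMeasurable
  have hprod : ∫ ω, |S ω| ^ (p - 2) * X ω ^ 2 ∂P
      = (∫ ω, |S ω| ^ (p - 2) ∂P) * ∫ ω, X ω ^ 2 ∂P :=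
    hind₂.integral_mul_eq_mul_integral hSp2.aestronglyMeasurable hX2.aestronglyMeasurable
  calc ∫ ω, |S ω + X ω| ^ p ∂P
      ≤ ∫ ω, |S ω| ^ p + p * (|S ω| ^ (p - 2) * S ω * X ω)
          + C * (|S ω| ^ (p - 2) * X ω ^ 2 + |X ω| ^ p) ∂P :=
        integral_mono ((hS.add hX).integrable_abs_rpow_of_le (by linarith) le_rfl)
          (hA.add (hB.const_mul C)) fun ω => abs_add_rpow_le hp (S ω) (X ω)
    _ = _ := by
        rw [integral_add hA (hB.const_mul C), integral_add hSp (hI₁.const_mul p),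
          integral_const_mul, integral_const_mul, integral_add hI₂ hXp, hcross, hprod,
          mul_zero, add_zero]

lemma integral_abs_add_rpow_le_rpow_of_indepFun {p : ℝ} (hp : 2 ≤ p) {S X : Ω → ℝ}
    (hSX : IndepFun S X P) (hS : MemLp S (ENNReal.ofReal p) P)
    (hX : MemLp X (ENNReal.ofReal p) P) (hX0 : ∫ ω, X ω ∂P = 0) :
    ∫ ω, |S ω + X ω| ^ p ∂P ≤ ∫ ω, |S ω| ^ p ∂P + p * (p - 1) * 2 ^ (p - 2) *
      ((∫ ω, |S ω| ^ p ∂P) ^ ((p - 2) / p) * (∫ ω, |X ω| ^ p ∂P) ^ (2 / p)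
        + ∫ ω, |X ω| ^ p ∂P) := by
  have hp1 : 0 ≤ p - 1 := by linarith
  have hS_mom := integral_abs_rpow_le_rpow_integral hS (q := p - 2) (by linarith) (by linarith)
  have hX_mom : ∫ ω, X ω ^ 2 ∂P ≤ (∫ ω, |X ω| ^ p ∂P) ^ (2 / p) := by
    simpa only [Real.rpow_two, sq_abs] using integral_abs_rpow_le_rpow_integral hX zero_le_two hp
  refine (integral_abs_add_rpow_le_of_indepFun hp hSX hS hX hX0).trans ?_
  gcongr

theorem integral_abs_sum_rpow_le {ι : Type*} {p : ℝ} (hp : 2 ≤ p) {η : ι → Ω → ℝ}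
    (hind : iIndepFun η P) (hLp : ∀ i, MemLp (η i) (ENNReal.ofReal p) P)
    (hmean : ∀ i, ∫ ω, η i ω ∂P = 0) (s : Finset ι) :
    ∫ ω, |∑ i ∈ s, η i ω| ^ p ∂P ≤ (2 * (p * (p - 1) * 2 ^ (p - 2))) ^ p *
      (∑ i ∈ s, (∫ ω, |η i ω| ^ p ∂P) ^ (2 / p)) ^ (p / 2) := by
  classical
  have hp0 : 0 < p := by linarith
  have hC : 1 ≤ p * (p - 1) * 2 ^ (p - 2) := by
    have h₁ : 1 ≤ p * (p - 1) := by nlinarith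
    exact one_le_mul_of_one_le_of_one_le h₁ (Real.one_le_rpow one_le_two (by linarith))
  have hmom : ∀ i, 0 ≤ ∫ ω, |η i ω| ^ p ∂P := fun i => integral_nonneg fun ω => by positivity
  induction s using Finset.induction_on with
  | empty => simp [Real.zero_rpow hp0.ne', Real.zero_rpow (by positivity : p / 2 ≠ 0)]
  | insert j s hj ih =>
    have hind' : IndepFun (fun ω => ∑ i ∈ s, η i ω) (η j) P := by
      convert hind.indepFun_finsetSum_of_notMem₀ (fun i => (hLp i).aemeasurable) hj using 1
      ext ω; simp
    have hstep := integral_abs_add_rpow_le_rpow_of_indepFun hp hind'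
      (memLp_finsetSum s fun i _ => hLp i) (hLp j) (hmean j)
    have hj_mom : ((∫ ω, |η j ω| ^ p ∂P) ^ (2 / p)) ^ (p / 2) = ∫ ω, |η j ω| ^ p ∂P := by
      rw [← Real.rpow_mul (hmom j), div_mul_div_cancel₀ hp0.ne', div_self two_ne_zero,
        Real.rpow_one]
    have hrec := le_mul_rpow_add_of_le_mul_rpow (C := p * (p - 1) * 2 ^ (p - 2))
      (b := (∫ ω, |η j ω| ^ p ∂P) ^ (2 / p)) hp (by linarith) (by linarith) (by nlinarith)
      (integral_nonneg fun ω => by positivity) (sum_nonneg fun i _ => by positivity)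
      (by positivity) ih
    rw [hj_mom] at hrec
    calc ∫ ω, |∑ i ∈ insert j s, η i ω| ^ p ∂P = ∫ ω, |∑ i ∈ s, η i ω + η j ω| ^ p ∂P := by
          simp only [sum_insert hj, add_comm (η j _)]
      _ ≤ _ := hstep.trans hrec
      _ = _ := by rw [sum_insert hj, add_comm]

theorem lintegral_abs_sum_rpow_rpow_le {ι : Type*} [Fintype ι] {p : ℝ} (hp : 2 ≤ p)
    {η : ι → Ω → ℝ} (hind : iIndepFun η P) (hLp : ∀ i, MemLp (η i) (ENNReal.ofReal p) P)
    (hmean : ∀ i, ∫ ω, η i ω ∂P = 0) :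
    (∫⁻ ω, ENNReal.ofReal |∑ i, η i ω| ^ p ∂P) ^ (1 / p)
      ≤ ENNReal.ofReal (2 * (p * (p - 1) * 2 ^ (p - 2))) *
          (∑ i, (∫⁻ ω, ENNReal.ofReal |η i ω| ^ p ∂P) ^ (2 / p)) ^ ((1 : ℝ) / 2) := by
  have hp0 : 0 < p := by linarith
  have hp1 : 0 < p - 1 := by linarith
  set K := 2 * (p * (p - 1) * 2 ^ (p - 2))
  set m : ι → ℝ := fun i => ∫ ω, |η i ω| ^ p ∂P
  have hm : ∀ i, 0 ≤ m i := fun i => integral_nonneg fun ω => by positivity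
  have hB : 0 ≤ ∑ i, m i ^ (2 / p) := sum_nonneg fun i _ => by positivity
  rw [lintegral_ofReal_abs_rpow hp0.le
    ((memLp_finsetSum univ fun i _ => hLp i).integrable_abs_rpow_of_le hp0.le le_rfl)]
  simp_rw [lintegral_ofReal_abs_rpow hp0.le ((hLp _).integrable_abs_rpow_of_le hp0.le le_rfl)]
  calc ENNReal.ofReal (∫ ω, |∑ i, η i ω| ^ p ∂P) ^ (1 / p)
      = ENNReal.ofReal ((∫ ω, |∑ i, η i ω| ^ p ∂P) ^ (1 / p)) :=
        ofReal_rpow_of_nonneg (integral_nonneg fun ω => by positivity) (by positivity)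
    _ ≤ ENNReal.ofReal ((K ^ p * (∑ i, m i ^ (2 / p)) ^ (p / 2)) ^ (1 / p)) := by
        gcongr
        exact integral_abs_sum_rpow_le hp hind hLp hmean univ
    _ = ENNReal.ofReal K * (∑ i, ENNReal.ofReal (m i) ^ (2 / p)) ^ ((1 : ℝ) / 2) := by
        rw [Real.mul_rpow (by positivity) (by positivity), ← Real.rpow_mul (by positivity),
          ← Real.rpow_mul hB, mul_one_div_cancel hp0.ne', Real.rpow_one,
          show p / 2 * (1 / p) = 1 / 2 by field_simp, ofReal_mul (by positivity),
          ← ofReal_rpow_of_nonneg hB (by norm_num), ofReal_sum_of_nonneg fun i _ => by positivity]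
        simp_rw [ofReal_rpow_of_nonneg (hm _) (by positivity : 0 ≤ 2 / p)]

end

/-- Rosenthal-type inequality for independent (not necessarily identically
distributed) centered variables: for each `p ∈ [2,∞)` there is `K(p) ∈ (0,∞)` with
`(E|∑ ηᵢ|^p)^{1/p} ≤ K(p) (∑ (E|ηᵢ|^p)^{2/p})^{1/2}`. -/
theorem stmt_7 (p : ℝ) (hp : 2 ≤ p) :
    ∃ K : ℝ, 0 < K ∧
      ∀ (Ω : Type) [MeasurableSpace Ω] (P : Measure Ω) [IsProbabilityMeasure P]
        (n : ℕ), 1 ≤ n →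
        ∀ η : Fin n → Ω → ℝ,
        (∀ i, Measurable (η i)) →
        iIndepFun η P →
        (∀ i, ∫ ω, η i ω ∂P = 0) →
        (∀ i, (∫⁻ ω, ENNReal.ofReal |η i ω| ^ p ∂P) < ⊤) →
        (∫⁻ ω, ENNReal.ofReal |∑ i, η i ω| ^ p ∂P) ^ (1 / p)
          ≤ ENNReal.ofReal K *
              (∑ i, (∫⁻ ω, ENNReal.ofReal |η i ω| ^ p ∂P) ^ (2 / p)) ^ ((1 : ℝ) / 2) := by
  have hp1 : 0 < p - 1 := by linarith
  refine ⟨2 * (p * (p - 1) * 2 ^ (p - 2)), by positivity,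
    fun Ω _ P _ n _ η hmeas hind hmean hmom => ?_⟩
  refine lintegral_abs_sum_rpow_rpow_le hp hind (fun i => ?_) hmean
  exact memLp_ofReal_of_lintegral_lt_top (by linarith) (hmeas i).aestronglyMeasurable (hmom i)
end

section
/- Let φ : ℝ → ℝ be a function, τ > 0, and let η be a real random variable such that E exp(λ η) ≤ exp(φ(λ τ)) for all λ ∈ ℝ. Define φ̄(λ) = sup_{n ≥ 1} n · φ(λ/√n). Then for independent copies (η_i) of η, for every n ≥ 1 and every λ ∈ ℝ: E exp( λ · n^{−1/2} ∑_{i=1}^n η_i ) ≤ exp( φ̄(λ τ) ). Equivalently, ‖n^{−1/2} ∑_{i=1}^n η_i‖_{B(φ̄)} ≤ ‖η‖_{B(φ)}, so B(φ) is a weak normal rearrangement invariant space with CLT(B(φ)) = B(φ̄). -/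
open MeasureTheory ProbabilityTheory ENNReal Finset

/-!
Independence factorises the Laplace transform of `n^{-1/2} ∑ ηᵢ` at `λ` into the product of
`n` copies of that of `η` at `λ / √n`; each factor is at most `exp (φ (λ τ / √n))`, so the
product is at most `exp (n φ (λ τ / √n))`, which is one of the terms of the supremum `φ̄ (λ τ)`.
Working with lower Lebesgue integrals avoids any integrability bookkeeping.
-/

section LaplaceTransform

variable {Ω ι : Type*} [MeasurableSpace Ω] {μ : Measure Ω}

theorem lintegral_ofReal_exp_mul_sum_eq_prod {X : ι → Ω → ℝ} (hX : iIndepFun X μ)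
    (hXm : ∀ i, Measurable (X i)) (s : Finset ι) (t : ℝ) :
    ∫⁻ ω, ENNReal.ofReal (Real.exp (t * ∑ i ∈ s, X i ω)) ∂μ
      = ∏ i ∈ s, ∫⁻ ω, ENNReal.ofReal (Real.exp (t * X i ω)) ∂μ := by
  have hexp : Measurable fun x : ℝ => ENNReal.ofReal (Real.exp (t * x)) := by fun_prop
  have hfactor : ∀ ω, ENNReal.ofReal (Real.exp (t * ∑ i ∈ s, X i ω))
      = ∏ i ∈ s, ENNReal.ofReal (Real.exp (t * X i ω)) := fun ω => by
    rw [Finset.mul_sum, Real.exp_sum,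
      ENNReal.ofReal_prod_of_nonneg fun i _ => (Real.exp_pos _).le]
  simp_rw [hfactor]
  exact lintegral_prod_eq_prod_lintegral_of_indepFun s _
    (hX.comp (fun _ x => ENNReal.ofReal (Real.exp (t * x))) fun _ => hexp)
    fun i => hexp.comp (hXm i)

theorem lintegral_ofReal_exp_mul_sum_le {X : ι → Ω → ℝ} (hX : iIndepFun X μ)
    (hXm : ∀ i, Measurable (X i)) (s : Finset ι) (t c : ℝ)
    (hbound : ∀ i ∈ s, ∫⁻ ω, ENNReal.ofReal (Real.exp (t * X i ω)) ∂μ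
      ≤ ENNReal.ofReal (Real.exp c)) :
    ∫⁻ ω, ENNReal.ofReal (Real.exp (t * ∑ i ∈ s, X i ω)) ∂μ
      ≤ ENNReal.ofReal (Real.exp (#s * c)) := by
  calc ∫⁻ ω, ENNReal.ofReal (Real.exp (t * ∑ i ∈ s, X i ω)) ∂μ
      = ∏ i ∈ s, ∫⁻ ω, ENNReal.ofReal (Real.exp (t * X i ω)) ∂μ :=
        lintegral_ofReal_exp_mul_sum_eq_prod hX hXm s t
    _ ≤ ∏ _i ∈ s, ENNReal.ofReal (Real.exp c) := Finset.prod_le_prod' hbound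
    _ = ENNReal.ofReal (Real.exp (#s * c)) := by
        rw [Finset.prod_const, ← ENNReal.ofReal_pow (Real.exp_pos c).le, ← Real.exp_nat_mul]

end LaplaceTransform

theorem stmt_11_general {Ω : Type*} [MeasurableSpace Ω] (P : Measure Ω) [IsProbabilityMeasure P]
    (φ : ℝ → ℝ) (τ : ℝ) (η : Ω → ℝ)
    (hmgf : ∀ l : ℝ,
      ∫⁻ ω, ENNReal.ofReal (Real.exp (l * η ω)) ∂P
        ≤ ENNReal.ofReal (Real.exp (φ (l * τ))))
    (ηs : ℕ → Ω → ℝ) (hmeas' : ∀ i, Measurable (ηs i))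
    (hindep : iIndepFun ηs P)
    (hcopy : ∀ i, IdentDistrib (ηs i) η P P)
    (n : ℕ) (hn : 1 ≤ n) (l : ℝ) :
    ∫⁻ ω, ENNReal.ofReal
        (Real.exp (l * ((∑ i ∈ Finset.range n, ηs i ω) / Real.sqrt n))) ∂P
      ≤ ⨆ (m : ℕ) (_ : 1 ≤ m),
          ENNReal.ofReal (Real.exp ((m : ℝ) * φ (l * τ / Real.sqrt m))) := by
  set t := l / Real.sqrt n with ht
  have hcopy_bound : ∀ i ∈ Finset.range n,
      ∫⁻ ω, ENNReal.ofReal (Real.exp (t * ηs i ω)) ∂P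
        ≤ ENNReal.ofReal (Real.exp (φ (t * τ))) := fun i _ =>
    ((hcopy i).comp (by fun_prop : Measurable fun x : ℝ =>
      ENNReal.ofReal (Real.exp (t * x)))).lintegral_eq.trans_le (hmgf t)
  calc ∫⁻ ω, ENNReal.ofReal (Real.exp (l * ((∑ i ∈ Finset.range n, ηs i ω) / Real.sqrt n))) ∂P
      = ∫⁻ ω, ENNReal.ofReal (Real.exp (t * ∑ i ∈ Finset.range n, ηs i ω)) ∂P := by
        simp only [ht, mul_div, div_mul_eq_mul_div]
    _ ≤ ENNReal.ofReal (Real.exp (n * φ (l * τ / Real.sqrt n))) := by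
        simpa only [Finset.card_range, ht, div_mul_eq_mul_div]
          using lintegral_ofReal_exp_mul_sum_le hindep hmeas' _ t _ hcopy_bound
    _ ≤ _ := le_iSup₂_of_le n hn le_rfl

/-- if `E exp(λη) ≤ exp(φ(λτ))` for all `λ`, then for independent copies
`(ηᵢ)` of `η` and all `n ≥ 1`, `λ`:
`E exp(λ n^{-1/2} ∑ηᵢ) ≤ exp(φ̄(λτ))`, where `φ̄(λ) = sup_{m ≥ 1} m φ(λ/√m)` (the
supremum over positive integers, here rendered as the supremum in `ℝ≥0∞` of
`exp(m φ(λτ/√m))`, which equals `exp(φ̄(λτ))`). Thus `B(φ)` is a weak normal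
rearrangement invariant space with `CLT(B(φ)) = B(φ̄)`. -/
theorem stmt_11 {Ω : Type*} [MeasurableSpace Ω] (P : Measure Ω) [IsProbabilityMeasure P]
    (φ : ℝ → ℝ) (τ : ℝ) (hτ : 0 < τ) (η : Ω → ℝ) (hmeas : Measurable η)
    (hmgf : ∀ l : ℝ,
      ∫⁻ ω, ENNReal.ofReal (Real.exp (l * η ω)) ∂P
        ≤ ENNReal.ofReal (Real.exp (φ (l * τ))))
    (ηs : ℕ → Ω → ℝ) (hmeas' : ∀ i, Measurable (ηs i))
    (hindep : iIndepFun ηs P)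
    (hcopy : ∀ i, IdentDistrib (ηs i) η P P)
    (n : ℕ) (hn : 1 ≤ n) (l : ℝ) :
    ∫⁻ ω, ENNReal.ofReal
        (Real.exp (l * ((∑ i ∈ Finset.range n, ηs i ω) / Real.sqrt n))) ∂P
      ≤ ⨆ (m : ℕ) (_ : 1 ≤ m),
          ENNReal.ofReal (Real.exp ((m : ℝ) * φ (l * τ / Real.sqrt m))) :=
  stmt_11_general P φ τ η hmgf ηs hmeas' hindep hcopy n hn l
end

section
/- Let Q > 1 and let φ : ℝ → ℝ be an even convex function with φ(0) = 0 such that for some constants 0 < c₁ ≤ c₂: c₁ λ^Q ≤ φ(λ) ≤ c₂ λ^Q for all λ ≥ 1, and φ(λ) ≤ c₂ λ² for all λ ∈ [0,1]. Then there exist constants 0 < C₁ ≤ C₂ < ∞ (depending only on c₁, c₂, Q) such that for all λ ≥ 1: C₁ λ^{max(2,Q)} ≤ sup_{n ≥ 1} n φ(λ/√n) ≤ C₂ λ^{max(2,Q)}. In particular, if φ(λ) ≍ λ^Q for λ ≥ 1 then φ̄(λ) ≍ λ^{max(2,Q)} for λ ≥ 1. -/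
open Real

/-- if `φ` is even, convex, `φ(0) = 0`, `φ(λ) ≍ λ^Q` for `λ ≥ 1`
(`Q > 1`), and `φ(λ) ≤ c₂λ²` on `[0,1]`, then
`φ̄(λ) = sup_{n ≥ 1} n φ(λ/√n) ≍ λ^{max(2,Q)}` for `λ ≥ 1`, with constants depending
only on `c₁, c₂, Q`. -/
theorem stmt_12 (Q c₁ c₂ : ℝ) (hQ : 1 < Q) (hc₁ : 0 < c₁) (hc : c₁ ≤ c₂) :
    ∃ C₁ C₂ : ℝ, 0 < C₁ ∧ C₁ ≤ C₂ ∧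
      ∀ φ : ℝ → ℝ,
        (∀ l : ℝ, φ (-l) = φ l) →
        ConvexOn ℝ Set.univ φ →
        φ 0 = 0 →
        (∀ l : ℝ, 1 ≤ l → c₁ * l ^ Q ≤ φ l ∧ φ l ≤ c₂ * l ^ Q) →
        (∀ l ∈ Set.Icc (0 : ℝ) 1, φ l ≤ c₂ * l ^ (2 : ℝ)) →
        ∀ l : ℝ, 1 ≤ l →
          C₁ * l ^ max 2 Q ≤ (⨆ n : ℕ+, (n : ℝ) * φ (l / Real.sqrt (n : ℕ))) ∧
          (⨆ n : ℕ+, (n : ℝ) * φ (l / Real.sqrt (n : ℕ))) ≤ C₂ * l ^ max 2 Q := by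
  have hc₂ : 0 < c₂ := lt_of_lt_of_le hc₁ hc
  refine ⟨c₁ / 2, c₂, by positivity, by linarith, ?_⟩
  intro φ _ hconv h0 hge hle l hl
  have hl0 : (0:ℝ) < l := lt_of_lt_of_le one_pos hl
  have h2max : l ^ (2:ℝ) ≤ l ^ max 2 Q :=
    Real.rpow_le_rpow_of_exponent_le hl (le_max_left _ _)
  have hQmax : l ^ Q ≤ l ^ max 2 Q :=
    Real.rpow_le_rpow_of_exponent_le hl (le_max_right _ _)
  -- upper bound for each term
  have hub : ∀ n : ℕ+, (n:ℝ) * φ (l / Real.sqrt ((n:ℕ))) ≤ c₂ * l ^ max 2 Q := by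
    intro n
    have hn1 : (1:ℝ) ≤ ((n:ℕ):ℝ) := by exact_mod_cast n.one_le
    set s := Real.sqrt ((n:ℕ)) with hs
    have hs1 : 1 ≤ s := by
      rw [hs, show (1:ℝ) = Real.sqrt 1 by simp]
      exact Real.sqrt_le_sqrt hn1
    have hs0 : (0:ℝ) < s := lt_of_lt_of_le one_pos hs1
    have hss : s ^ (2:ℝ) = ((n:ℕ):ℝ) := by
      rw [Real.rpow_two, sq]
      exact Real.mul_self_sqrt (by positivity)
    rcases le_or_gt 1 (l / s) with ht | ht
    · -- l/s ≥ 1 : use φ(t) ≤ c₂ t^Q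
      have hφ := (hge _ ht).2
      have hterm : ((n:ℕ):ℝ) * φ (l / s) ≤ ((n:ℕ):ℝ) * (c₂ * (l / s) ^ Q) :=
        mul_le_mul_of_nonneg_left hφ (by positivity)
      have hsl : s ≤ l := (one_le_div hs0).mp ht
      have hval : ((n:ℕ):ℝ) * (l / s) ^ Q = l ^ Q * s ^ ((2:ℝ) - Q) := by
        rw [Real.div_rpow hl0.le hs0.le, Real.rpow_sub hs0, hss]
        field_simp
      have hbound : ((n:ℕ):ℝ) * (l / s) ^ Q ≤ l ^ max 2 Q := by
        rw [hval]
        rcases le_total Q 2 with hQ2 | hQ2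
        · have h1 : s ^ ((2:ℝ) - Q) ≤ l ^ ((2:ℝ) - Q) :=
            Real.rpow_le_rpow hs0.le hsl (by linarith)
          have h2 : l ^ Q * s ^ ((2:ℝ) - Q) ≤ l ^ Q * l ^ ((2:ℝ) - Q) :=
            mul_le_mul_of_nonneg_left h1 (by positivity)
          have h3 : l ^ Q * l ^ ((2:ℝ) - Q) = l ^ (2:ℝ) := by
            rw [← Real.rpow_add hl0]; ring_nf
          calc l ^ Q * s ^ ((2:ℝ) - Q) ≤ l ^ (2:ℝ) := by rw [← h3]; exact h2
            _ ≤ l ^ max 2 Q := h2max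
        · have h1 : s ^ ((2:ℝ) - Q) ≤ 1 :=
            Real.rpow_le_one_of_one_le_of_nonpos hs1 (by linarith)
          calc l ^ Q * s ^ ((2:ℝ) - Q) ≤ l ^ Q * 1 :=
                mul_le_mul_of_nonneg_left h1 (by positivity)
            _ = l ^ Q := by ring
            _ ≤ l ^ max 2 Q := hQmax
      calc ((n:ℕ):ℝ) * φ (l / s) ≤ ((n:ℕ):ℝ) * (c₂ * (l / s) ^ Q) := hterm
        _ = c₂ * (((n:ℕ):ℝ) * (l / s) ^ Q) := by ring
        _ ≤ c₂ * l ^ max 2 Q := mul_le_mul_of_nonneg_left hbound hc₂.le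
    · -- l/s ≤ 1 : use φ(t) ≤ c₂ t²
      have hφ := hle (l / s) ⟨by positivity, ht.le⟩
      have hterm : ((n:ℕ):ℝ) * φ (l / s) ≤ ((n:ℕ):ℝ) * (c₂ * (l / s) ^ (2:ℝ)) :=
        mul_le_mul_of_nonneg_left hφ (by positivity)
      have hval : ((n:ℕ):ℝ) * (l / s) ^ (2:ℝ) = l ^ (2:ℝ) := by
        rw [Real.div_rpow hl0.le hs0.le, hss]
        field_simp
      calc ((n:ℕ):ℝ) * φ (l / s) ≤ ((n:ℕ):ℝ) * (c₂ * (l / s) ^ (2:ℝ)) := hterm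
        _ = c₂ * (((n:ℕ):ℝ) * (l / s) ^ (2:ℝ)) := by ring
        _ = c₂ * l ^ (2:ℝ) := by rw [hval]
        _ ≤ c₂ * l ^ max 2 Q := mul_le_mul_of_nonneg_left h2max hc₂.le
  have hbdd : BddAbove (Set.range fun n : ℕ+ => (n:ℝ) * φ (l / Real.sqrt ((n:ℕ)))) :=
    ⟨c₂ * l ^ max 2 Q, Set.forall_mem_range.2 hub⟩
  constructor
  · -- lower bound
    rcases le_total Q 2 with hQ2 | hQ2
    · -- max = 2 : use n = ⌊l*l⌋
      have hmax : max 2 Q = 2 := max_eq_left hQ2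
      set m : ℕ := ⌊l * l⌋₊ with hm
      have hll1 : (1:ℝ) ≤ l * l := by nlinarith
      have hm1 : 1 ≤ m := Nat.le_floor (by exact_mod_cast hll1)
      have hmle : (m:ℝ) ≤ l * l := Nat.floor_le (by positivity)
      have hmge : l * l ≤ 2 * m := by
        rcases le_total (l * l) 2 with h2 | h2
        · have : (1:ℝ) ≤ (m:ℝ) := by exact_mod_cast hm1
          linarith
        · have : l * l - 1 < (m:ℝ) := Nat.sub_one_lt_floor _
          linarith
      set n0 : ℕ+ := ⟨m, hm1⟩ with hn0
      have hn0m : ((n0:ℕ):ℝ) = (m:ℝ) := rfl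
      have hs0 : (0:ℝ) < Real.sqrt m := Real.sqrt_pos.mpr (by exact_mod_cast hm1)
      have hsl : Real.sqrt m ≤ l := by
        calc Real.sqrt m ≤ Real.sqrt (l * l) := Real.sqrt_le_sqrt hmle
          _ = l := Real.sqrt_mul_self hl0.le
      have ht : 1 ≤ l / Real.sqrt m := (one_le_div hs0).mpr hsl
      have htQ : (1:ℝ) ≤ (l / Real.sqrt m) ^ Q :=
        Real.one_le_rpow ht (by linarith)
      have hφ : c₁ ≤ φ (l / Real.sqrt m) := by
        have := (hge _ ht).1
        nlinarith
      have hkey : c₁ / 2 * l ^ max 2 Q ≤ ((n0:ℕ):ℝ) * φ (l / Real.sqrt ((n0:ℕ))) := by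
        rw [hmax, hn0m, Real.rpow_two, sq]
        have hm0 : (0:ℝ) ≤ (m:ℝ) := by positivity
        calc c₁ / 2 * (l * l) ≤ c₁ * (m:ℝ) := by nlinarith
          _ ≤ (m:ℝ) * φ (l / Real.sqrt m) := by nlinarith
      exact le_ciSup_of_le hbdd n0 hkey
    · -- max = Q : use n = 1
      have hmax : max 2 Q = Q := max_eq_right hQ2
      have hkey : c₁ / 2 * l ^ max 2 Q ≤
          ((((1:ℕ+)):ℕ):ℝ) * φ (l / Real.sqrt (((1:ℕ+):ℕ))) := by
        have h1 : (((1:ℕ+):ℕ):ℝ) = 1 := by norm_num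
        have h2 : Real.sqrt (((1:ℕ+):ℕ)) = 1 := by norm_num
        rw [hmax, h1, Real.sqrt_one, one_mul, div_one]
        have := (hge l hl).1
        have hlQ : (0:ℝ) ≤ l ^ Q := by positivity
        nlinarith
      exact le_ciSup_of_le hbdd 1 hkey
  · exact ciSup_le hub
end

section
/- Let m > 2 and let (η_i)_{i≥1} be independent identically distributed symmetric real random variables with P(|η₁| > x) = exp(−x^m) for all x > 0. Then sup_{n ≥ 1} sup_{p ≥ 2} [ (E| n^{−1/2} ∑_{i=1}^n η_i |^p)^{1/p} / p^{1/m} ] = ∞. That is, η₁ belongs to the space G_m = { centered η : sup_{p≥2} (E|η|^p)^{1/p}/p^{1/m} < ∞ }, but its CLT norm in G_m is infinite, so CLT(G_m) differs essentially from G_m. -/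
open MeasureTheory ProbabilityTheory ENNReal Finset Filter Topology

/-! On the event that `η₀, …, ηₙ₋₁` all exceed `1`, which has probability `c ^ n` with
`c = P(η₀ > 1) > 0`, the normalized sum is at least `√n`. Taking `p = n` therefore gives
`(E|n^{-1/2} ∑ ηᵢ|^n)^{1/n} / n^{1/m} ≥ c n^{1/2 - 1/m}`, which is unbounded because `m > 2`. -/

section

variable {Ω : Type*} [MeasurableSpace Ω] {P : Measure Ω}

theorem ofReal_mul_rpow_measure_le_lintegral {f : Ω → ℝ} {s : Set Ω} (hs : MeasurableSet s)
    {b : ℝ} (hb : ∀ ω ∈ s, b ≤ |f ω|) {p : ℝ} (hp : 0 < p) :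
    ENNReal.ofReal b * P s ^ (1 / p) ≤ (∫⁻ ω, ENNReal.ofReal |f ω| ^ p ∂P) ^ (1 / p) := by
  have hint : ENNReal.ofReal b ^ p * P s ≤ ∫⁻ ω, ENNReal.ofReal |f ω| ^ p ∂P :=
    calc ENNReal.ofReal b ^ p * P s = ∫⁻ _ in s, ENNReal.ofReal b ^ p ∂P :=
          (setLIntegral_const _ _).symm
      _ ≤ ∫⁻ ω in s, ENNReal.ofReal |f ω| ^ p ∂P :=
        setLIntegral_mono' hs fun ω hω => by gcongr; exact hb ω hω
      _ ≤ ∫⁻ ω, ENNReal.ofReal |f ω| ^ p ∂P := setLIntegral_le_lintegral _ _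
  calc ENNReal.ofReal b * P s ^ (1 / p) = (ENNReal.ofReal b ^ p * P s) ^ (1 / p) := by
        rw [ENNReal.mul_rpow_of_nonneg _ _ (by positivity), ← ENNReal.rpow_mul,
          mul_one_div_cancel hp.ne', ENNReal.rpow_one]
    _ ≤ _ := by gcongr

theorem mul_sqrt_le_abs_sum_div_sqrt {n : ℕ} {a : ℝ} {x : ℕ → ℝ}
    (hx : ∀ i ∈ range n, a < x i) :
    a * √n ≤ |(∑ i ∈ range n, x i) / √n| := by
  have hsum : n * a ≤ ∑ i ∈ range n, x i := by
    simpa using sum_le_sum fun i hi => (hx i hi).le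
  calc a * √n = n * a / √n := by
        rw [mul_div_right_comm, Real.div_sqrt, mul_comm]
    _ ≤ (∑ i ∈ range n, x i) / √n := by gcongr
    _ ≤ _ := le_abs_self _

variable {X : ℕ → Ω → ℝ}

theorem measure_forall_lt_eq_pow (hindep : iIndepFun X P)
    (hid : ∀ i, IdentDistrib (X i) (X 0) P P) (a : ℝ) (n : ℕ) :
    P (⋂ i ∈ range n, X i ⁻¹' Set.Ioi a) = P (X 0 ⁻¹' Set.Ioi a) ^ n := by
  rw [hindep.meas_biInter fun i _ => ⟨Set.Ioi a, measurableSet_Ioi, rfl⟩,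
    prod_congr rfl fun i _ => (hid i).measure_mem_eq measurableSet_Ioi]
  simp

theorem ofReal_mul_measure_le_moment_div (hmeas : ∀ i, Measurable (X i))
    (hindep : iIndepFun X P) (hid : ∀ i, IdentDistrib (X i) (X 0) P P) (m a : ℝ) {n : ℕ}
    (hn : 1 ≤ n) :
    ENNReal.ofReal (a * (n : ℝ) ^ (1 / 2 - 1 / m)) * P (X 0 ⁻¹' Set.Ioi a) ≤
      (∫⁻ ω, ENNReal.ofReal |(∑ i ∈ range n, X i ω) / √n| ^ (n : ℝ) ∂P) ^ (1 / (n : ℝ))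
        / ENNReal.ofReal ((n : ℝ) ^ (1 / m)) := by
  have hn0 : (0 : ℝ) < n := by exact_mod_cast hn
  have hs : MeasurableSet (⋂ i ∈ range n, X i ⁻¹' Set.Ioi a) :=
    .biInter (range n).countable_toSet fun i _ => hmeas i measurableSet_Ioi
  have hmoment := ofReal_mul_rpow_measure_le_lintegral (P := P) hs
    (fun ω hω => mul_sqrt_le_abs_sum_div_sqrt (by simpa using hω)) hn0
  rw [measure_forall_lt_eq_pow hindep hid, ← ENNReal.rpow_natCast, ← ENNReal.rpow_mul,
    mul_one_div_cancel hn0.ne', ENNReal.rpow_one] at hmoment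
  calc ENNReal.ofReal (a * (n : ℝ) ^ (1 / 2 - 1 / m)) * P (X 0 ⁻¹' Set.Ioi a)
      = ENNReal.ofReal (a * √n) * P (X 0 ⁻¹' Set.Ioi a)
          / ENNReal.ofReal ((n : ℝ) ^ (1 / m)) := by
        rw [ENNReal.mul_div_right_comm, ← ENNReal.ofReal_div_of_pos (by positivity),
          Real.sqrt_eq_rpow, Real.rpow_sub hn0, mul_div_assoc]
    _ ≤ _ := by gcongr

theorem iSup_moment_div_eq_top (hmeas : ∀ i, Measurable (X i))
    (hindep : iIndepFun X P) (hid : ∀ i, IdentDistrib (X i) (X 0) P P) {m : ℝ} (hm : 2 < m)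
    {a : ℝ} (ha : 0 < a) (hpos : P (X 0 ⁻¹' Set.Ioi a) ≠ 0) :
    (⨆ (n : ℕ) (_ : 1 ≤ n), ⨆ (p : ℝ) (_ : 2 ≤ p),
        (∫⁻ ω, ENNReal.ofReal |(∑ i ∈ range n, X i ω) / √n| ^ p ∂P)
            ^ (1 / p) / ENNReal.ofReal (p ^ (1 / m))) = ⊤ := by
  have hα : 0 < 1 / 2 - 1 / m := by
    have : 1 / m < 1 / 2 := one_div_lt_one_div_of_lt two_pos hm
    linarith
  have hlim : Tendsto (fun n : ℕ => ENNReal.ofReal (a * (n : ℝ) ^ (1 / 2 - 1 / m)) *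
      P (X 0 ⁻¹' Set.Ioi a)) atTop (𝓝 ⊤) := by
    rw [← ENNReal.top_mul hpos]
    refine ENNReal.Tendsto.mul_const (ENNReal.tendsto_ofReal_atTop.comp ?_) (.inl top_ne_zero)
    exact ((tendsto_rpow_atTop hα).comp tendsto_natCast_atTop_atTop).const_mul_atTop ha
  refine top_unique (le_of_tendsto hlim ((eventually_ge_atTop 2).mono fun n hn => ?_))
  refine le_iSup₂_of_le n (by omega) (le_iSup₂_of_le (n : ℝ) (by exact_mod_cast hn) ?_)
  exact ofReal_mul_measure_le_moment_div hmeas hindep hid m a (by omega)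

theorem measure_preimage_Ioi_ne_zero_of_symm {Y : Ω → ℝ}
    (hsymm : IdentDistrib Y (fun ω => -Y ω) P P) {a : ℝ} (h : P {ω | a < |Y ω|} ≠ 0) :
    P (Y ⁻¹' Set.Ioi a) ≠ 0 := by
  intro h0
  have hneg : P {ω | Y ω < -a} = 0 := by
    rw [← h0, hsymm.measure_mem_eq measurableSet_Ioi]
    congr 1
    ext ω
    simp [lt_neg]
  refine h (measure_mono_null (fun ω hω => ?_) (measure_union_null h0 hneg))
  simpa [lt_abs, lt_neg] using hω

end

theorem stmt_14_general (m : ℝ) (hm : 2 < m)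
    {Ω : Type*} [MeasurableSpace Ω] (P : Measure Ω)
    (η : ℕ → Ω → ℝ) (hmeas : ∀ i, Measurable (η i))
    (hindep : iIndepFun η P)
    (hid : ∀ i, IdentDistrib (η i) (η 0) P P)
    (hsymm : IdentDistrib (η 0) (fun ω => -η 0 ω) P P)
    (htail : ∀ x : ℝ, 0 < x →
      P {ω | x < |η 0 ω|} = ENNReal.ofReal (Real.exp (-(x ^ m)))) :
    (⨆ (n : ℕ) (_ : 1 ≤ n), ⨆ (p : ℝ) (_ : 2 ≤ p),
        (∫⁻ ω, ENNReal.ofReal |(∑ i ∈ Finset.range n, η i ω) / Real.sqrt n| ^ p ∂P)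
            ^ (1 / p) / ENNReal.ofReal (p ^ (1 / m)))
      = ⊤ := by
  have htail_one : P {ω | 1 < |η 0 ω|} ≠ 0 := by
    rw [htail 1 one_pos]
    exact ENNReal.ofReal_ne_zero_iff.mpr (Real.exp_pos _)
  exact iSup_moment_div_eq_top hmeas hindep hid hm one_pos
    (measure_preimage_Ioi_ne_zero_of_symm hsymm htail_one)

/-- for `m > 2`, if `(ηᵢ)` are i.i.d. symmetric with
`P(|η₁| > x) = exp(-x^m)` for `x > 0` (so `η₁ ∈ G_m`), then the `G_m` (CLT) norms of the
normalized sums blow up: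
`sup_{n ≥ 1} sup_{p ≥ 2} (E|n^{-1/2}∑ηᵢ|^p)^{1/p} / p^{1/m} = ∞`. -/
theorem stmt_14 (m : ℝ) (hm : 2 < m)
    {Ω : Type*} [MeasurableSpace Ω] (P : Measure Ω) [IsProbabilityMeasure P]
    (η : ℕ → Ω → ℝ) (hmeas : ∀ i, Measurable (η i))
    (hindep : iIndepFun η P)
    (hid : ∀ i, IdentDistrib (η i) (η 0) P P)
    (hsymm : IdentDistrib (η 0) (fun ω => -η 0 ω) P P)
    (htail : ∀ x : ℝ, 0 < x →
      P {ω | x < |η 0 ω|} = ENNReal.ofReal (Real.exp (-(x ^ m)))) :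
    (⨆ (n : ℕ) (_ : 1 ≤ n), ⨆ (p : ℝ) (_ : 2 ≤ p),
        (∫⁻ ω, ENNReal.ofReal |(∑ i ∈ Finset.range n, η i ω) / Real.sqrt n| ^ p ∂P)
            ^ (1 / p) / ENNReal.ofReal (p ^ (1 / m)))
      = ⊤ :=
  stmt_14_general m hm P η hmeas hindep hid hsymm htail
end

section
/- Let m > 2 and let η be a real random variable with E η = 0 and P(|η| > x) ≤ exp(−x^m) for all x ≥ 0. Then there exists a constant C = C(m) < ∞ such that for independent copies (η_i) of η, for every n ≥ 1 and every p ≥ 2: (E| n^{−1/2} ∑_{i=1}^n η_i |^p)^{1/p} ≤ C √p. Equivalently, the normalized sums are uniformly subgaussian: the CLT space of G_m coincides with the subgaussian space G₂. -/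
/-!
Since `m > 2`, the tail bound gives `P(|η| > x) ≤ e · exp (-x²)`, hence `𝔼 exp (η² / 2) ≤ 1 + e`.
A centered variable with a bounded Gaussian exponential moment is sub-Gaussian, with a variance
proxy `c` depending only on that bound: expand `exp (t η)` to second order for small `t`, and use
`t η ≤ t² / 2 + η² / 2` for large `t`. Variance proxies add over independent summands, so
`n^{-1/2} ∑ ηᵢ` is sub-Gaussian with the same proxy `c` for every `n`. Finally
`|x|^p ≤ (p / (l e))^p (exp (l x) + exp (-l x))` at `l = √(p / c)` turns the mgf bound into
`‖n^{-1/2} ∑ ηᵢ‖_p ≤ 2 √(c p)`.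
-/

open MeasureTheory ProbabilityTheory ENNReal Finset

open Real
open scoped NNReal

namespace Real

lemma exp_le_add_exp_sq (x : ℝ) : exp x ≤ x + exp (x ^ 2) := by
  rcases le_or_gt 1 x with hx | hx
  · have : exp x ≤ exp (x ^ 2) := exp_le_exp.2 (by nlinarith)
    linarith
  have hquad : exp x ≤ 1 + x + x ^ 2 := by
    rcases le_or_gt x (-1) with hx' | hx'
    · have : exp x ≤ 1 := exp_le_one_iff.2 (by linarith)
      nlinarith
    · have := abs_exp_sub_one_sub_id_le (abs_le.2 ⟨hx'.le, hx.le⟩)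
      linarith [(abs_le.1 this).2]
  linarith [add_one_le_exp (x ^ 2)]

lemma exp_mul_le_one_sub_add_mul_exp {θ : ℝ} (h0 : 0 ≤ θ) (h1 : θ ≤ 1) (y : ℝ) :
    exp (θ * y) ≤ 1 - θ + θ * exp y := by
  have := convexOn_exp.2 (Set.mem_univ y) (Set.mem_univ 0) h0 (sub_nonneg.2 h1)
    (add_sub_cancel θ 1)
  simp only [smul_eq_mul, mul_zero, add_zero, exp_zero, mul_one] at this
  linarith

lemma rpow_le_mul_exp {y p : ℝ} (hy : 0 ≤ y) (hp : 0 < p) :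
    y ^ p ≤ (p / exp 1) ^ p * exp y := by
  have h : y / p ≤ exp (y / p - 1) := by linarith [add_one_le_exp (y / p - 1)]
  calc y ^ p = p ^ p * (y / p) ^ p := by
        rw [div_rpow hy hp.le, mul_div_cancel₀ _ (rpow_pos_of_pos hp p).ne']
    _ ≤ p ^ p * exp (y / p - 1) ^ p := by gcongr
    _ = (p / exp 1) ^ p * exp y := by
        rw [← exp_mul, div_rpow hp.le (exp_pos 1).le, exp_one_rpow, sub_mul,
          div_mul_cancel₀ _ hp.ne', one_mul, exp_sub]
        ring

lemma abs_rpow_le_mul_exp_add_exp {x l p : ℝ} (hl : 0 < l) (hp : 0 < p) :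
    |x| ^ p ≤ (p / (l * exp 1)) ^ p * (exp (l * x) + exp (-(l * x))) := by
  have hlp : 0 < l ^ p := rpow_pos_of_pos hl p
  calc |x| ^ p = (l * |x|) ^ p / l ^ p := by
        rw [mul_rpow hl.le (abs_nonneg x), mul_div_cancel_left₀ _ hlp.ne']
    _ ≤ (p / exp 1) ^ p * exp |l * x| / l ^ p := by
        rw [← abs_of_pos hl, ← abs_mul, abs_of_pos hl]
        gcongr
        exact rpow_le_mul_exp (abs_nonneg _) hp
    _ ≤ (p / exp 1) ^ p * (exp (l * x) + exp (-(l * x))) / l ^ p := by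
        gcongr
        exact exp_abs_le _
    _ = (p / (l * exp 1)) ^ p * (exp (l * x) + exp (-(l * x))) := by
        rw [div_mul_eq_div_div_swap, div_rpow (by positivity) hl.le]
        ring

lemma exp_neg_rpow_le_exp_one_mul {m x : ℝ} (hm : 2 ≤ m) (hx : 0 ≤ x) :
    exp (-x ^ m) ≤ exp 1 * exp (-x ^ 2) := by
  rw [← exp_add, exp_le_exp]
  rcases le_or_gt x 1 with h | h
  · nlinarith [rpow_nonneg hx m]
  · have : x ^ (2 : ℝ) ≤ x ^ m := rpow_le_rpow_of_exponent_le h.le hm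
    norm_cast at this
    linarith

end Real

section ExpSquare

variable {Ω : Type*} {mΩ : MeasurableSpace Ω} {μ : Measure Ω} {X : Ω → ℝ}

lemma lintegral_exp_sq_half_le_of_tail [IsProbabilityMeasure μ] (hX : AEMeasurable X μ)
    {C : ℝ} (hC : 0 ≤ C)
    (htail : ∀ x : ℝ, 0 ≤ x → μ {ω | x < |X ω|} ≤ ENNReal.ofReal (C * exp (-x ^ 2))) :
    ∫⁻ ω, ENNReal.ofReal (exp (X ω ^ 2 / 2)) ∂μ ≤ ENNReal.ofReal (1 + C) := by
  rw [lintegral_eq_lintegral_meas_lt μ (ae_of_all _ fun ω ↦ (exp_pos _).le) (by fun_prop),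
    ← Set.Ioc_union_Ioi_eq_Ioi zero_le_one,
    lintegral_union measurableSet_Ioi (Set.Ioc_disjoint_Ioi le_rfl),
    ENNReal.ofReal_add zero_le_one hC, ENNReal.ofReal_one]
  gcongr
  · calc ∫⁻ t in Set.Ioc 0 1, μ {ω | t < exp (X ω ^ 2 / 2)}
        ≤ ∫⁻ _ in Set.Ioc (0 : ℝ) 1, 1 := lintegral_mono fun _ ↦ prob_le_one
      _ = 1 := by simp
  have hlevel : ∀ t ∈ Set.Ioi (1 : ℝ),
      μ {ω | t < exp (X ω ^ 2 / 2)} ≤ ENNReal.ofReal (C * t ^ (-2 : ℝ)) := by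
    intro t ht
    have ht0 : 0 < t := zero_lt_one.trans ht
    have hlog : 0 ≤ 2 * log t := by linarith [log_nonneg ht.le]
    have hsub : {ω | t < exp (X ω ^ 2 / 2)} ⊆ {ω | √(2 * log t) < |X ω|} := by
      intro ω hω
      have : 2 * log t < X ω ^ 2 := by linarith [(log_lt_iff_lt_exp ht0).2 hω]
      simpa [sqrt_sq_eq_abs] using sqrt_lt_sqrt hlog this
    calc μ {ω | t < exp (X ω ^ 2 / 2)} ≤ μ {ω | √(2 * log t) < |X ω|} := measure_mono hsub
      _ ≤ ENNReal.ofReal (C * exp (-√(2 * log t) ^ 2)) := htail _ (sqrt_nonneg _)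
      _ = ENNReal.ofReal (C * t ^ (-2 : ℝ)) := by
          rw [sq_sqrt hlog, rpow_def_of_pos ht0]
          ring_nf
  have hint : IntegrableOn (fun t : ℝ ↦ C * t ^ (-2 : ℝ)) (Set.Ioi 1) :=
    (integrableOn_Ioi_rpow_of_lt (by norm_num) one_pos).const_mul C
  calc ∫⁻ t in Set.Ioi 1, μ {ω | t < exp (X ω ^ 2 / 2)}
      ≤ ∫⁻ t in Set.Ioi 1, ENNReal.ofReal (C * t ^ (-2 : ℝ)) :=
        setLIntegral_mono' measurableSet_Ioi hlevel
    _ = ENNReal.ofReal C := by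
        rw [← ofReal_integral_eq_lintegral_ofReal hint, integral_const_mul,
          integral_Ioi_rpow_of_lt (by norm_num) one_pos]
        · norm_num
        · filter_upwards [ae_restrict_mem measurableSet_Ioi] with t (ht : 1 < t)
          have := rpow_nonneg (zero_lt_one.trans ht).le (-2)
          positivity

end ExpSquare

section MGF

variable {Ω : Type*} {mΩ : MeasurableSpace Ω} {μ : Measure Ω} {X : Ω → ℝ}

lemma integrable_exp_mul_of_integrable_exp_sq_half (hX : AEMeasurable X μ)
    (hg : Integrable (fun ω ↦ exp (X ω ^ 2 / 2)) μ) (t : ℝ) :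
    Integrable (fun ω ↦ exp (t * X ω)) μ := by
  refine (hg.const_mul (exp (t ^ 2 / 2))).mono' (by fun_prop) (ae_of_all _ fun ω ↦ ?_)
  rw [norm_of_nonneg (exp_pos _).le, ← exp_add, exp_le_exp]
  nlinarith [sq_nonneg (t - X ω)]

lemma mgf_le_of_sq_le_half [IsProbabilityMeasure μ] (hX : AEMeasurable X μ) (hmean : μ[X] = 0)
    (hg : Integrable (fun ω ↦ exp (X ω ^ 2 / 2)) μ) {K : ℝ}
    (hK : ∫ ω, exp (X ω ^ 2 / 2) ∂μ ≤ K) {t : ℝ} (ht : 2 * t ^ 2 ≤ 1) :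
    mgf X μ t ≤ exp (2 * K * t ^ 2) := by
  have hθ : 0 ≤ 2 * t ^ 2 := by positivity
  have hpt : ∀ ω, exp (t * X ω)
      ≤ t * X ω + ((1 - 2 * t ^ 2) + 2 * t ^ 2 * exp (X ω ^ 2 / 2)) := fun ω ↦ by
    have h := exp_le_add_exp_sq (t * X ω)
    have hconv := exp_mul_le_one_sub_add_mul_exp hθ ht (X ω ^ 2 / 2)
    rw [show (t * X ω) ^ 2 = 2 * t ^ 2 * (X ω ^ 2 / 2) by ring] at h
    linarith
  have hXint : Integrable X μ := integrable_of_mem_interior_integrableExpSet (by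
    simp [integrableExpSet, integrable_exp_mul_of_integrable_exp_sq_half hX hg])
  have hrhs : Integrable (fun ω ↦ (1 - 2 * t ^ 2) + 2 * t ^ 2 * exp (X ω ^ 2 / 2)) μ :=
    (integrable_const _).add (hg.const_mul _)
  calc mgf X μ t
      ≤ ∫ ω, t * X ω + ((1 - 2 * t ^ 2) + 2 * t ^ 2 * exp (X ω ^ 2 / 2)) ∂μ :=
        integral_mono (integrable_exp_mul_of_integrable_exp_sq_half hX hg t)
          ((hXint.const_mul t).add hrhs) hpt
    _ = 1 - 2 * t ^ 2 + 2 * t ^ 2 * ∫ ω, exp (X ω ^ 2 / 2) ∂μ := by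
        rw [integral_add (hXint.const_mul t) hrhs, integral_add (integrable_const _)
          (hg.const_mul _), integral_const_mul, integral_const_mul, hmean]
        simp
    _ ≤ 1 + 2 * K * t ^ 2 := by nlinarith
    _ ≤ exp (2 * K * t ^ 2) := by linarith [add_one_le_exp (2 * K * t ^ 2)]

lemma mgf_le_of_half_le_sq (hX : AEMeasurable X μ)
    (hg : Integrable (fun ω ↦ exp (X ω ^ 2 / 2)) μ) {K : ℝ} (hK0 : 0 ≤ K)
    (hK : ∫ ω, exp (X ω ^ 2 / 2) ∂μ ≤ K) {t : ℝ} (ht : 1 ≤ 2 * t ^ 2) :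
    mgf X μ t ≤ exp ((1 / 2 + 2 * K) * t ^ 2) := by
  have hpt : ∀ ω, exp (t * X ω) ≤ exp (t ^ 2 / 2) * exp (X ω ^ 2 / 2) := fun ω ↦ by
    rw [← exp_add, exp_le_exp]
    nlinarith [sq_nonneg (t - X ω)]
  calc mgf X μ t ≤ ∫ ω, exp (t ^ 2 / 2) * exp (X ω ^ 2 / 2) ∂μ :=
        integral_mono (integrable_exp_mul_of_integrable_exp_sq_half hX hg t)
          (hg.const_mul _) hpt
    _ ≤ exp (t ^ 2 / 2) * K := by
        rw [integral_const_mul]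
        gcongr
    _ ≤ exp (t ^ 2 / 2) * exp (2 * K * t ^ 2) := by
        gcongr
        nlinarith [add_one_le_exp (2 * K * t ^ 2)]
    _ = exp ((1 / 2 + 2 * K) * t ^ 2) := by
        rw [← exp_add]
        ring_nf

lemma hasSubgaussianMGF_of_lintegral_exp_sq_half_le [IsProbabilityMeasure μ]
    (hX : AEMeasurable X μ) (hmean : μ[X] = 0) {K : ℝ≥0}
    (hK : ∫⁻ ω, ENNReal.ofReal (exp (X ω ^ 2 / 2)) ∂μ ≤ K) :
    HasSubgaussianMGF X (1 + 4 * K) μ := by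
  have hpos : 0 ≤ᵐ[μ] fun ω ↦ exp (X ω ^ 2 / 2) := ae_of_all _ fun ω ↦ (exp_pos _).le
  have hg : Integrable (fun ω ↦ exp (X ω ^ 2 / 2)) μ :=
    ⟨by fun_prop, (hasFiniteIntegral_iff_ofReal hpos).2 (hK.trans_lt coe_lt_top)⟩
  have hKint : ∫ ω, exp (X ω ^ 2 / 2) ∂μ ≤ K := by
    rw [integral_eq_lintegral_of_nonneg_ae hpos (by fun_prop)]
    exact toReal_le_of_le_ofReal K.2 (by simpa using hK)
  refine ⟨integrable_exp_mul_of_integrable_exp_sq_half hX hg, fun t ↦ ?_⟩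
  have hbound : (1 / 2 + 2 * K) * t ^ 2 = ((1 + 4 * K : ℝ≥0) : ℝ) * t ^ 2 / 2 := by
    push_cast
    ring
  rw [← hbound]
  rcases le_total (2 * t ^ 2) 1 with ht | ht
  · refine (mgf_le_of_sq_le_half hX hmean hg hKint ht).trans (exp_le_exp.2 ?_)
    nlinarith [sq_nonneg t]
  · exact mgf_le_of_half_le_sq hX hg K.2 hKint ht

lemma lintegral_abs_rpow_le_mgf_add_mgf {l p : ℝ} (hl : 0 < l) (hp : 0 < p)
    (hpos : Integrable (fun ω ↦ exp (l * X ω)) μ) (hneg : Integrable (fun ω ↦ exp (-l * X ω)) μ) :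
    ∫⁻ ω, ENNReal.ofReal (|X ω| ^ p) ∂μ
      ≤ ENNReal.ofReal ((p / (l * exp 1)) ^ p * (mgf X μ l + mgf X μ (-l))) := by
  simp_rw [neg_mul] at hneg
  have hint : Integrable
      (fun ω ↦ (p / (l * exp 1)) ^ p * (exp (l * X ω) + exp (-(l * X ω)))) μ :=
    (hpos.add hneg).const_mul _
  calc ∫⁻ ω, ENNReal.ofReal (|X ω| ^ p) ∂μ
      ≤ ∫⁻ ω, ENNReal.ofReal ((p / (l * exp 1)) ^ p * (exp (l * X ω) + exp (-(l * X ω)))) ∂μ :=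
        lintegral_mono fun ω ↦ ofReal_le_ofReal (abs_rpow_le_mul_exp_add_exp hl hp)
    _ = ENNReal.ofReal ((p / (l * exp 1)) ^ p * (mgf X μ l + mgf X μ (-l))) := by
        rw [← ofReal_integral_eq_lintegral_ofReal hint (ae_of_all _ fun ω ↦ by positivity),
          integral_const_mul, integral_add hpos hneg]
        simp_rw [mgf, neg_mul]

end MGF

namespace ProbabilityTheory.HasSubgaussianMGF

variable {Ω : Type*} {mΩ : MeasurableSpace Ω} {μ : Measure Ω} {X : Ω → ℝ} {c : ℝ≥0}

lemma lintegral_abs_rpow_le (h : HasSubgaussianMGF X c μ) (hc : 0 < c) {p : ℝ} (hp : 0 < p) :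
    ∫⁻ ω, ENNReal.ofReal (|X ω| ^ p) ∂μ ≤ ENNReal.ofReal (2 * (c * p) ^ (p / 2)) := by
  -- `l = √(p / c)` balances `(p / l) ^ p` against `exp (c l² / 2) = exp (p / 2)`
  set l := √(p / c) with hl
  have hl0 : 0 < l := sqrt_pos.2 (by positivity)
  have hmgf : ∀ s : ℝ, s ^ 2 = l ^ 2 → mgf X μ s ≤ exp (p / 2) := fun s hs ↦ by
    refine (h.mgf_le s).trans (exp_le_exp.2 (le_of_eq ?_))
    rw [hs, hl, sq_sqrt (by positivity)]
    field_simp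
  have hpl : p / l = √(c * p) := by
    rw [div_eq_iff hl0.ne', hl, ← sqrt_mul (by positivity),
      show c * p * (p / c) = p ^ 2 by field_simp, sqrt_sq hp.le]
  have hexp : exp 1 ^ p = exp (p / 2) * exp (p / 2) := by rw [exp_one_rpow, ← exp_add]; ring_nf
  calc ∫⁻ ω, ENNReal.ofReal (|X ω| ^ p) ∂μ
      ≤ ENNReal.ofReal ((p / (l * exp 1)) ^ p * (mgf X μ l + mgf X μ (-l))) :=
        lintegral_abs_rpow_le_mgf_add_mgf hl0 hp (h.integrable_exp_mul l)
          (h.integrable_exp_mul (-l))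
    _ ≤ ENNReal.ofReal ((p / (l * exp 1)) ^ p * (2 * exp (p / 2))) := by
        gcongr
        linarith [hmgf l rfl, hmgf (-l) (neg_sq l)]
    _ = ENNReal.ofReal (2 * √(c * p) ^ p / exp (p / 2)) := by
        rw [← div_div, hpl, div_rpow (sqrt_nonneg _) (exp_pos 1).le, hexp]
        field_simp
    _ ≤ ENNReal.ofReal (2 * (c * p) ^ (p / 2)) := by
        rw [sqrt_eq_rpow, ← rpow_mul (by positivity), one_div_mul_eq_div]
        exact ofReal_le_ofReal (div_le_self (by positivity) (one_le_exp (by positivity)))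

lemma lintegral_rpow_one_div_le (h : HasSubgaussianMGF X c μ) (hc : 0 < c) {p : ℝ} (hp : 1 ≤ p) :
    (∫⁻ ω, ENNReal.ofReal |X ω| ^ p ∂μ) ^ (1 / p) ≤ ENNReal.ofReal (2 * √(c * p)) := by
  have hp0 : 0 < p := zero_lt_one.trans_le hp
  simp_rw [ofReal_rpow_of_nonneg (abs_nonneg _) hp0.le]
  calc (∫⁻ ω, ENNReal.ofReal (|X ω| ^ p) ∂μ) ^ (1 / p)
      ≤ ENNReal.ofReal (2 * (c * p) ^ (p / 2)) ^ (1 / p) := by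
        gcongr
        exact h.lintegral_abs_rpow_le hc hp0
    _ = ENNReal.ofReal (2 ^ (1 / p) * √(c * p)) := by
        rw [ofReal_rpow_of_nonneg (by positivity) (by positivity), mul_rpow (by positivity)
          (by positivity), ← rpow_mul (by positivity), sqrt_eq_rpow]
        congr 3
        field_simp
    _ ≤ ENNReal.ofReal (2 * √(c * p)) := by
        gcongr
        exact rpow_le_self_of_one_le one_le_two (by rw [div_le_one hp0]; exact hp)

lemma sum_range_div_sqrt {X : ℕ → Ω → ℝ} (h_indep : iIndepFun X μ)
    (h : ∀ i, HasSubgaussianMGF (X i) c μ) {n : ℕ} (hn : 1 ≤ n) :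
    HasSubgaussianMGF (fun ω ↦ (∑ i ∈ range n, X i ω) / √n) c μ := by
  have hn0 : (0 : ℝ) < n := by exact_mod_cast hn
  convert (sum_of_iIndepFun h_indep (s := range n) fun i _ ↦ h i).const_mul (√n)⁻¹ using 1
  · simp_rw [div_eq_inv_mul]
  · apply NNReal.eq
    change (c : ℝ) = (√n)⁻¹ ^ 2 * ((∑ _ ∈ range n, c : ℝ≥0) : ℝ)
    rw [NNReal.coe_sum, sum_const, card_range, nsmul_eq_mul, inv_pow, sq_sqrt hn0.le]
    field_simp

end ProbabilityTheory.HasSubgaussianMGF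

/-- for `m > 2` there is a constant `C = C(m) < ∞` such that any centered
`η` with `P(|η| > x) ≤ exp(-x^m)` has uniformly subgaussian normalized sums of
independent copies: `(E|n^{-1/2}∑ηᵢ|^p)^{1/p} ≤ C √p` for all `n ≥ 1`, `p ≥ 2`;
i.e. `CLT(G_m)` coincides with the subgaussian space `G₂`. -/
theorem stmt_15 (m : ℝ) (hm : 2 < m) :
    ∃ C : ℝ,
      ∀ (Ω : Type) [MeasurableSpace Ω] (P : Measure Ω) [IsProbabilityMeasure P]
        (η : Ω → ℝ), Measurable η →
        (∫ ω, η ω ∂P = 0) →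
        (∀ x : ℝ, 0 ≤ x →
          P {ω | x < |η ω|} ≤ ENNReal.ofReal (Real.exp (-(x ^ m)))) →
        ∀ (ηs : ℕ → Ω → ℝ), (∀ i, Measurable (ηs i)) →
        iIndepFun ηs P →
        (∀ i, IdentDistrib (ηs i) η P P) →
        ∀ (n : ℕ), 1 ≤ n → ∀ p : ℝ, 2 ≤ p →
          (∫⁻ ω, ENNReal.ofReal |(∑ i ∈ Finset.range n, ηs i ω) / Real.sqrt n| ^ p ∂P)
              ^ (1 / p)
            ≤ ENNReal.ofReal (C * Real.sqrt p) := by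
  set c : ℝ≥0 := 1 + 4 * (1 + exp 1).toNNReal
  refine ⟨2 * √c, fun Ω _ P _ η hη hmean htail ηs _ hindep hid n hn p hp ↦ ?_⟩
  have hη_exp_sq := lintegral_exp_sq_half_le_of_tail hη.aemeasurable (exp_pos 1).le
    fun x hx ↦ (htail x hx).trans (ofReal_le_ofReal (exp_neg_rpow_le_exp_one_mul hm.le hx))
  have hη_subG : HasSubgaussianMGF η c P :=
    hasSubgaussianMGF_of_lintegral_exp_sq_half_le hη.aemeasurable hmean hη_exp_sq
  have hS := HasSubgaussianMGF.sum_range_div_sqrt hindep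
    (fun i ↦ hη_subG.congr_identDistrib (hid i).symm) hn
  calc _ ≤ ENNReal.ofReal (2 * √(c * p)) :=
        hS.lintegral_rpow_one_div_le (by positivity) (by linarith)
    _ = ENNReal.ofReal (2 * √c * √p) := by rw [sqrt_mul c.coe_nonneg, mul_assoc]
end
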